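/- Let p ≥ 1 be an integer, let T be an inverse Gaussian random variable with parameters ν = λ/μ and κ = λ²/σ² (λ, μ, σ > 0), let Z be a standard Gaussian vector in ℝᵖ independent of T, and set N = σ√T · Z. Then the characteristic function of N is Φ_N(ω) = exp(−λ(sqrt(u² + ‖ω‖²) − u)) for all ω ∈ ℝᵖ, where u = μ/σ². -/

import Mathlib

open MeasureTheory Real ProbabilityTheory

/-- The inverse Gaussian density `IG(ν, κ)` on `(0, ∞)` (extended by `0` elsewhere). -/
noncomputable def igDensity (ν κ t : ℝ) : ℝ :=
  if 0 < t then
    Real.sqrt (κ / (2 * π * t ^ 3)) * Real.exp (-(κ * (t - ν) ^ 2) / (2 * ν ^ 2 * t))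
  else 0

/-!
Conditionally on `T = t`, the vector `N` is centred Gaussian with covariance `σ² t I`, so
`Φ_N(ω) = E[exp (-σ² ‖ω‖² T / 2)]` is the Laplace transform of the inverse Gaussian law at
`s = σ² ‖ω‖² / 2`. The substitution `t = b / x²` turns that transform into
`∫₀^∞ exp (-(x² + c / x²)) dx = √π / 2 · exp (-2 √c)`, which follows from the
Cauchy–Schlömilch substitution `y = x - √c / x`: it maps `(0, ∞)` onto `ℝ` with Jacobian
`1 + √c / x²`, and the two halves of that Jacobian contribute equally because `x ↦ √c / x`
preserves `(x - √c / x)²`.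
-/

open Set Complex

theorem integral_comp_div_pow_Ioi {E : Type*} [NormedAddCommGroup E] [NormedSpace ℝ E]
    (g : ℝ → E) {b : ℝ} (hb : 0 < b) {n : ℕ} (hn : n ≠ 0) :
    ∫ x in Ioi 0, (n * b / x ^ (n + 1)) • g (b / x ^ n) = ∫ t in Ioi 0, g t := by
  have himage : (fun x : ℝ => b / x ^ n) '' Ioi 0 = Ioi 0 := by
    refine Subset.antisymm (image_subset_iff.2 fun x (hx : 0 < x) => by simp; positivity)
      fun t (ht : 0 < t) => ⟨(b / t) ^ (n⁻¹ : ℝ), by simp; positivity, ?_⟩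
    simp only
    rw [Real.rpow_inv_natCast_pow (by positivity) hn]
    field_simp
  have hinj : InjOn (fun x : ℝ => b / x ^ n) (Ioi 0) := fun x (hx : 0 < x) y (hy : 0 < y) h =>
    (pow_left_inj₀ hx.le hy.le hn).1 (by field_simp at h; linarith)
  have hderiv : ∀ x ∈ Ioi (0 : ℝ),
      HasDerivWithinAt (fun x : ℝ => b / x ^ n) (-(n * b / x ^ (n + 1))) (Ioi 0) x := by
    intro x (hx : 0 < x)
    refine (((hasDerivAt_const x b).div (hasDerivAt_pow n x) (by positivity)).congr_deriv
      ?_).hasDerivWithinAt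
    rcases n with _ | k
    · exact absurd rfl hn
    rw [Nat.add_sub_cancel]
    field_simp
    ring
  have hsubst := integral_image_eq_integral_abs_deriv_smul measurableSet_Ioi hderiv hinj g
  rw [himage] at hsubst
  rw [hsubst]
  refine setIntegral_congr_fun measurableSet_Ioi fun x (hx : 0 < x) => ?_
  rw [abs_neg, abs_of_pos (by positivity)]

theorem image_sub_div_Ioi {d : ℝ} (hd : 0 < d) : (fun x : ℝ => x - d / x) '' Ioi 0 = univ := by
  refine eq_univ_of_forall fun y => ?_
  have hs := Real.sq_sqrt (show 0 ≤ y ^ 2 + 4 * d by positivity)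
  have hpos : 0 < y + √(y ^ 2 + 4 * d) := by
    have : |y| < √(y ^ 2 + 4 * d) := by
      rw [← Real.sqrt_sq_eq_abs]
      exact Real.sqrt_lt_sqrt (sq_nonneg y) (by linarith)
    linarith [neg_abs_le y]
  refine ⟨(y + √(y ^ 2 + 4 * d)) / 2, half_pos hpos, ?_⟩
  field_simp
  nlinarith

theorem injOn_sub_div_Ioi {d : ℝ} (hd : 0 ≤ d) : InjOn (fun x : ℝ => x - d / x) (Ioi 0) := by
  intro x (hx : 0 < x) y (hy : 0 < y) h
  have : (x - y) * (x * y + d) = 0 := by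
    field_simp at h
    linear_combination h
  rcases mul_eq_zero.1 this with h | h
  · linarith
  · nlinarith [mul_pos hx hy]

theorem hasDerivAt_sub_div (d : ℝ) {x : ℝ} (hx : x ≠ 0) :
    HasDerivAt (fun x : ℝ => x - d / x) (1 + d / x ^ 2) x := by
  refine ((hasDerivAt_id x).sub ((hasDerivAt_const x d).div (hasDerivAt_id x) hx)).congr_deriv ?_
  simp
  ring

section SubDiv

variable {E : Type*} [NormedAddCommGroup E] [NormedSpace ℝ E] (g : ℝ → E) {d : ℝ}

theorem integral_comp_sub_div_Ioi (hd : 0 < d) :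
    ∫ x in Ioi 0, (1 + d / x ^ 2) • g (x - d / x) = ∫ y, g y := by
  conv_rhs => rw [← setIntegral_univ, ← image_sub_div_Ioi hd]
  rw [integral_image_eq_integral_abs_deriv_smul measurableSet_Ioi
      (fun x (hx : 0 < x) => (hasDerivAt_sub_div d hx.ne').hasDerivWithinAt)
      (injOn_sub_div_Ioi hd.le)]
  refine setIntegral_congr_fun measurableSet_Ioi fun x (hx : 0 < x) => ?_
  rw [abs_of_pos (by positivity)]

theorem integrableOn_comp_sub_div_Ioi (hd : 0 < d) :
    IntegrableOn (fun x => (1 + d / x ^ 2) • g (x - d / x)) (Ioi 0) ↔ Integrable g := by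
  rw [← integrableOn_univ, ← image_sub_div_Ioi hd,
    integrableOn_image_iff_integrableOn_abs_deriv_smul measurableSet_Ioi
      (fun x (hx : 0 < x) => (hasDerivAt_sub_div d hx.ne').hasDerivWithinAt)
      (injOn_sub_div_Ioi hd.le)]
  refine integrableOn_congr_fun (fun x (hx : 0 < x) => ?_) measurableSet_Ioi
  rw [abs_of_pos (by positivity)]

end SubDiv

theorem integral_exp_neg_sq_sub_div {d : ℝ} (hd : 0 < d) :
    ∫ x in Ioi 0, Real.exp (-(x - d / x) ^ 2) = √π / 2 := by
  set f : ℝ → ℝ := fun x => Real.exp (-(x - d / x) ^ 2) with hf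
  have hgauss : Integrable fun y : ℝ => Real.exp (-y ^ 2) := by
    simpa using integrable_exp_neg_mul_sq one_pos
  have hgauss_eq : ∫ y, Real.exp (-y ^ 2) = √π := by simpa using integral_gaussian 1
  have hsum_int : IntegrableOn (fun x => (1 + d / x ^ 2) * f x) (Ioi 0) :=
    (integrableOn_comp_sub_div_Ioi (fun y => Real.exp (-y ^ 2)) hd).2 hgauss
  have hsum : ∫ x in Ioi 0, (1 + d / x ^ 2) * f x = √π :=
    (integral_comp_sub_div_Ioi _ hd).trans hgauss_eq
  have hf_int : IntegrableOn f (Ioi 0) := by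
    refine hsum_int.mono' (by fun_prop) (ae_restrict_of_forall_mem measurableSet_Ioi ?_)
    intro x (hx : 0 < x)
    rw [Real.norm_of_nonneg (Real.exp_nonneg _)]
    exact le_mul_of_one_le_left (Real.exp_nonneg _) (by simp; positivity)
  -- the substitution `x ↦ d / x` leaves `f` invariant
  have hreflect : ∫ x in Ioi 0, (d / x ^ 2) * f x = ∫ x in Ioi 0, f x := by
    rw [← integral_comp_div_pow_Ioi f hd one_ne_zero]
    refine setIntegral_congr_fun measurableSet_Ioi fun x (hx : 0 < x) => ?_
    simp only [hf, smul_eq_mul, Nat.cast_one, one_mul, pow_one]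
    congr 3
    field_simp
    ring
  have : ∫ x in Ioi 0, (d / x ^ 2) * f x = √π - ∫ x in Ioi 0, f x := by
    rw [← hsum, ← integral_sub hsum_int hf_int]
    congr 1 with x
    ring
  linarith

theorem integral_exp_neg_sq_add_div_sq {c : ℝ} (hc : 0 < c) :
    ∫ x in Ioi 0, Real.exp (-(x ^ 2 + c / x ^ 2)) = √π / 2 * Real.exp (-(2 * √c)) := by
  have hd : 0 < √c := Real.sqrt_pos.2 hc
  have hsq : √c ^ 2 = c := Real.sq_sqrt hc.le
  have hsplit : ∀ x ∈ Ioi (0 : ℝ), Real.exp (-(x ^ 2 + c / x ^ 2))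
      = Real.exp (-(2 * √c)) * Real.exp (-(x - √c / x) ^ 2) := fun x (hx : 0 < x) => by
    rw [← Real.exp_add]
    congr 1
    field_simp
    linear_combination hsq
  rw [setIntegral_congr_fun measurableSet_Ioi hsplit, integral_const_mul,
    integral_exp_neg_sq_sub_div hd, mul_comm]

theorem integral_exp_neg_mul_add_div_div_sqrt_pow_three {a b : ℝ} (ha : 0 < a) (hb : 0 < b) :
    ∫ t in Ioi 0, Real.exp (-(a * t + b / t)) / √(t ^ 3)
      = √(π / b) * Real.exp (-(2 * √(a * b))) := by
  have hsb : 0 < √b := Real.sqrt_pos.2 hb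
  have hsq : √b ^ 2 = b := Real.sq_sqrt hb.le
  rw [← integral_comp_div_pow_Ioi _ hb two_ne_zero]
  have hsubst : ∀ x ∈ Ioi (0 : ℝ),
      ((2 : ℕ) * b / x ^ (2 + 1)) • (Real.exp (-(a * (b / x ^ 2) + b / (b / x ^ 2)))
        / √((b / x ^ 2) ^ 3)) = 2 / √b * Real.exp (-(x ^ 2 + a * b / x ^ 2)) := by
    intro x (hx : 0 < x)
    have hroot : √((b / x ^ 2) ^ 3) = b * √b / x ^ 3 := by
      rw [Real.sqrt_eq_iff_eq_sq (by positivity) (by positivity)]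
      field_simp
      rw [hsq]
    rw [hroot, smul_eq_mul, ← hsq]
    field_simp
    ring_nf
  rw [setIntegral_congr_fun measurableSet_Ioi hsubst, integral_const_mul,
    integral_exp_neg_sq_add_div_sq (mul_pos ha hb), Real.sqrt_div' _ hb.le]
  ring

theorem measurable_igDensity (ν κ : ℝ) : Measurable (igDensity ν κ) := by
  unfold igDensity
  exact Measurable.ite measurableSet_Ioi (by fun_prop) measurable_const

theorem integral_withDensity_igDensity {E : Type*} [NormedAddCommGroup E] [NormedSpace ℝ E]
    (ν κ : ℝ) (f : ℝ → E) :
    ∫ t, f t ∂volume.withDensity (fun t => ENNReal.ofReal (igDensity ν κ t))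
      = ∫ t in Ioi 0, igDensity ν κ t • f t := by
  have hnonneg : ∀ t, 0 ≤ igDensity ν κ t := fun t => by
    unfold igDensity; split_ifs <;> positivity
  rw [integral_withDensity_eq_integral_toReal_smul (measurable_igDensity ν κ).ennreal_ofReal
    (ae_of_all _ fun _ => ENNReal.ofReal_lt_top)]
  rw [← setIntegral_eq_integral_of_forall_compl_eq_zero (s := Ioi 0)
    fun t (ht : ¬ 0 < t) => by simp [igDensity, ht]]
  simp only [ENNReal.toReal_ofReal (hnonneg _)]

theorem setIntegral_igDensity_mul_exp_neg_mul {ν κ s : ℝ} (hν : ν ≠ 0) (hκ : 0 < κ)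
    (hs : -(κ / (2 * ν ^ 2)) < s) :
    ∫ t in Ioi 0, igDensity ν κ t * Real.exp (-(s * t))
      = Real.exp (κ / ν - √(κ ^ 2 / ν ^ 2 + 2 * κ * s)) := by
  set a := κ / (2 * ν ^ 2) + s with ha_def
  set b := κ / 2 with hb_def
  have ha : 0 < a := by linarith
  have hb : 0 < b := by positivity
  have hfactor : ∀ t ∈ Ioi (0 : ℝ), igDensity ν κ t * Real.exp (-(s * t))
      = (√(κ / (2 * π)) * Real.exp (κ / ν)) * (Real.exp (-(a * t + b / t)) / √(t ^ 3)) := by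
    intro t (ht : 0 < t)
    rw [igDensity, if_pos ht, div_mul_eq_div_div, Real.sqrt_div' _ (by positivity)]
    have hexp : Real.exp (-(κ * (t - ν) ^ 2) / (2 * ν ^ 2 * t)) * Real.exp (-(s * t))
        = Real.exp (κ / ν) * Real.exp (-(a * t + b / t)) := by
      rw [← Real.exp_add, ← Real.exp_add]
      congr 1
      rw [ha_def, hb_def]
      field_simp
      ring
    rw [mul_assoc, hexp]
    ring
  have hnorm : √(κ / (2 * π)) * √(π / b) = 1 := by
    rw [← Real.sqrt_mul (by positivity), Real.sqrt_eq_one, hb_def]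
    field_simp
  have hroot : 2 * √(a * b) = √(κ ^ 2 / ν ^ 2 + 2 * κ * s) := by
    have hsq : κ ^ 2 / ν ^ 2 + 2 * κ * s = (2 * √(a * b)) ^ 2 := by
      rw [mul_pow, Real.sq_sqrt (by positivity), ha_def, hb_def]
      field_simp
    rw [hsq, Real.sqrt_sq (by positivity)]
  rw [setIntegral_congr_fun measurableSet_Ioi hfactor, integral_const_mul,
    integral_exp_neg_mul_add_div_div_sqrt_pow_three ha hb, ← hroot, sub_eq_add_neg, Real.exp_add,
    mul_mul_mul_comm, hnorm, one_mul]

theorem integral_cexp_sum_mul_pi_gaussianReal {ι : Type*} [Fintype ι] (c : ι → ℝ) :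
    ∫ z, cexp (I * ↑(∑ i, c i * z i)) ∂(Measure.pi fun _ : ι => gaussianReal 0 1)
      = cexp ↑(-(∑ i, c i ^ 2) / 2) := by
  have h := charFun_stdGaussian (WithLp.toLp 2 c)
  rw [← map_pi_eq_stdGaussian, charFun_apply, integral_map (by fun_prop) (by fun_prop)] at h
  convert h using 2 with z
  · simp [PiLp.inner_apply, mul_comm]
  · rw [← ofReal_pow, EuclideanSpace.real_norm_sq_eq]
    push_cast
    rfl

theorem ProbabilityTheory.IndepFun.integral_comp_eq_integral_integral
    {Ω α β E : Type*} [MeasurableSpace Ω] [MeasurableSpace α] [MeasurableSpace β]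
    [NormedAddCommGroup E] [NormedSpace ℝ E] {P : Measure Ω} [IsFiniteMeasure P]
    {T : Ω → α} {Z : Ω → β} (hind : IndepFun T Z P) (hT : AEMeasurable T P)
    (hZ : AEMeasurable Z P) {g : α × β → E} (hg : Integrable g ((P.map T).prod (P.map Z))) :
    ∫ x, g (T x, Z x) ∂P = ∫ t, ∫ z, g (t, z) ∂(P.map Z) ∂(P.map T) := by
  have hmap := hind.map_prod_eq_prod_map_map hT hZ
  rw [← integral_prod _ hg, ← hmap, integral_map (hT.prodMk hZ) (hmap ▸ hg.1)]

theorem ndfhl_characteristic_function_general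
    {Ω : Type*} [MeasurableSpace Ω] (P : Measure Ω) [IsProbabilityMeasure P]
    (p : ℕ) (lam mu σ : ℝ) (hlam : 0 < lam) (hmu : 0 < mu) (hσ : 0 < σ)
    (T : Ω → ℝ) (Z : Ω → Fin p → ℝ) (hTmeas : Measurable T) (hZmeas : Measurable Z)
    (hTlaw : P.map T
      = MeasureTheory.volume.withDensity
          (fun t => ENNReal.ofReal (igDensity (lam / mu) (lam ^ 2 / σ ^ 2) t)))
    (hZlaw : P.map Z = Measure.pi fun _ : Fin p => gaussianReal 0 1)
    (hindep : IndepFun T Z P) :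
    ∀ w : Fin p → ℝ,
      ∫ x, Complex.exp (Complex.I * ((∑ i, w i * (σ * Real.sqrt (T x) * Z x i) : ℝ) : ℂ)) ∂P
        = Complex.exp (-((lam : ℂ) *
            ((Real.sqrt ((mu / σ ^ 2) ^ 2 + ∑ i, w i ^ 2) - mu / σ ^ 2 : ℝ) : ℂ))) := by
  intro w
  set K := ∑ i, w i ^ 2
  set g : ℝ × (Fin p → ℝ) → ℂ := fun q =>
    cexp (I * ↑(∑ i, w i * (σ * √q.1 * q.2 i)))
  have hg : Integrable g ((P.map T).prod (P.map Z)) :=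
    .of_bound (by fun_prop) 1 (ae_of_all _ fun q => (norm_exp_I_mul_ofReal _).le)
  have hgauss : ∀ t ∈ Ioi (0 : ℝ),
      igDensity (lam / mu) (lam ^ 2 / σ ^ 2) t • ∫ z, g (t, z) ∂(P.map Z)
        = ↑(igDensity (lam / mu) (lam ^ 2 / σ ^ 2) t * Real.exp (-(σ ^ 2 * K / 2 * t))) := by
    intro t (ht : 0 < t)
    have := integral_cexp_sum_mul_pi_gaussianReal fun i => w i * (σ * √t)
    simp only [mul_pow, Real.sq_sqrt ht.le, ← Finset.sum_mul, mul_assoc] at this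
    simp only [g, hZlaw, mul_assoc, this, Complex.real_smul, Complex.ofReal_mul, Complex.ofReal_exp]
    congr 3
    ring
  have hexponent : lam ^ 2 / σ ^ 2 / (lam / mu)
      - √((lam ^ 2 / σ ^ 2) ^ 2 / (lam / mu) ^ 2 + 2 * (lam ^ 2 / σ ^ 2) * (σ ^ 2 * K / 2))
      = -(lam * (√((mu / σ ^ 2) ^ 2 + K) - mu / σ ^ 2)) := by
    have hrad : (lam ^ 2 / σ ^ 2) ^ 2 / (lam / mu) ^ 2 + 2 * (lam ^ 2 / σ ^ 2) * (σ ^ 2 * K / 2)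
        = lam ^ 2 * ((mu / σ ^ 2) ^ 2 + K) := by
      field_simp
    rw [hrad, Real.sqrt_mul (sq_nonneg _), Real.sqrt_sq hlam.le]
    field_simp
    ring
  rw [hindep.integral_comp_eq_integral_integral hTmeas.aemeasurable hZmeas.aemeasurable hg,
    hTlaw, integral_withDensity_igDensity, setIntegral_congr_fun measurableSet_Ioi hgauss,
    integral_complex_ofReal, setIntegral_igDensity_mul_exp_neg_mul (by positivity) (by positivity)
      ((neg_neg_of_pos (by positivity)).trans_le (by positivity)), hexponent]
  push_cast
  ring_nf

/-- for `T ~ IG(λ/μ, λ²/σ²)`, `Z ~ N(0, I_p)` independent of `T`, and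
`N = σ√T·Z`, the characteristic function of `N` is
`Φ_N(ω) = exp(−λ(√(u² + ‖ω‖²) − u))` with `u = μ/σ²`. -/
theorem ndfhl_characteristic_function
    {Ω : Type*} [MeasurableSpace Ω] (P : Measure Ω) [IsProbabilityMeasure P]
    (p : ℕ) (hp : 1 ≤ p) (lam mu σ : ℝ) (hlam : 0 < lam) (hmu : 0 < mu) (hσ : 0 < σ)
    (T : Ω → ℝ) (Z : Ω → Fin p → ℝ) (hTmeas : Measurable T) (hZmeas : Measurable Z)
    (hTlaw : P.map T
      = MeasureTheory.volume.withDensity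
          (fun t => ENNReal.ofReal (igDensity (lam / mu) (lam ^ 2 / σ ^ 2) t)))
    (hZlaw : P.map Z = Measure.pi fun _ : Fin p => gaussianReal 0 1)
    (hindep : IndepFun T Z P) :
    ∀ w : Fin p → ℝ,
      ∫ x, Complex.exp (Complex.I * ((∑ i, w i * (σ * Real.sqrt (T x) * Z x i) : ℝ) : ℂ)) ∂P
        = Complex.exp (-((lam : ℂ) *
            ((Real.sqrt ((mu / σ ^ 2) ^ 2 + ∑ i, w i ^ 2) - mu / σ ^ 2 : ℝ) : ℂ))) :=
  ndfhl_characteristic_function_general P p lam mu σ hlam hmu hσ T Z hTmeas hZmeas hTlaw hZlaw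
    hindep
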